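/- Let B be a bialgebra over a commutative ring R. Every left-invariant derivation X of B satisfies X = id ⋆ (ε ∘ X), i.e. X is determined by its 'value at the unit' ε ∘ X. Consequently, X ↦ ε ∘ X is an R-linear bijection from the space of left-invariant derivations of B onto the space of ε-derivations B → R, with inverse v ↦ id ⋆ v. -/

import Mathlib

/-!
Left invariance `(id ⊗ X) ∘ Δ = Δ ∘ X` lets `X` be pulled through the convolution:
`id ⋆ (ε ∘ X) = (id ⋆ ε) ∘ X = X` by counitality, and `ε ∘ X` is an `ε`-derivation because `ε`
is multiplicative. Conversely `id ⋆ v` is left-invariant by coassociativity, satisfies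
`ε ∘ (id ⋆ v) = v` by counitality, and is a derivation when `v` is an `ε`-derivation because `Δ`
is multiplicative.
-/

open TensorProduct

section

variable {R B : Type*} [CommRing R] [Ring B] [Bialgebra R B]

/-- A derivation of the bialgebra `B`: `X ∘ μ = μ ∘ (X ⊗ id + id ⊗ X)`. -/
def IsDerivation (X : B →ₗ[R] B) : Prop :=
  X ∘ₗ LinearMap.mul' R B =
    LinearMap.mul' R B ∘ₗ
      (TensorProduct.map X LinearMap.id + TensorProduct.map LinearMap.id X)

/-- A left-invariant linear map of the bialgebra `B`: `(id ⊗ X) ∘ Δ = Δ ∘ X`. -/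
def IsLeftInvariant (X : B →ₗ[R] B) : Prop :=
  TensorProduct.map LinearMap.id X ∘ₗ Coalgebra.comul = Coalgebra.comul ∘ₗ X

/-- An `ε`-derivation of `B` valued in `R`: `v(fg) = v(f)ε(g) + ε(f)v(g)`. -/
def IsEpsDerivation (v : B →ₗ[R] R) : Prop :=
  ∀ f g : B, v (f * g) = v f * Coalgebra.counit g + Coalgebra.counit f * v g

/-- The convolution `id ⋆ v = μ ∘ (id ⊗ v) ∘ Δ` (using `B ⊗ R ≃ B`); the left translation
of `v`. -/
noncomputable def leftTranslation (v : B →ₗ[R] R) : B →ₗ[R] B :=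
  (TensorProduct.rid R B).toLinearMap ∘ₗ
    TensorProduct.map LinearMap.id v ∘ₗ Coalgebra.comul

lemma leftTranslation_eq_rid_comp_lTensor_comp_comul (v : B →ₗ[R] R) :
    leftTranslation v = (TensorProduct.rid R B).toLinearMap ∘ₗ v.lTensor B ∘ₗ Coalgebra.comul :=
  rfl

lemma leftTranslation_counit : leftTranslation (Coalgebra.counit : B →ₗ[R] R) = LinearMap.id := by
  ext b
  simp [leftTranslation_eq_rid_comp_lTensor_comp_comul]

lemma IsLeftInvariant.leftTranslation_comp {X : B →ₗ[R] B} (hX : IsLeftInvariant X)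
    (v : B →ₗ[R] R) : leftTranslation (v ∘ₗ X) = leftTranslation v ∘ₗ X := by
  have hX' : X.lTensor B ∘ₗ Coalgebra.comul = Coalgebra.comul ∘ₗ X := hX
  simp only [leftTranslation_eq_rid_comp_lTensor_comp_comul, LinearMap.lTensor_comp,
    LinearMap.comp_assoc, hX']

lemma IsLeftInvariant.leftTranslation_counit_comp {X : B →ₗ[R] B} (hX : IsLeftInvariant X) :
    leftTranslation (Coalgebra.counit ∘ₗ X) = X := by
  rw [hX.leftTranslation_comp, leftTranslation_counit, LinearMap.id_comp]

lemma counit_comp_leftTranslation (v : B →ₗ[R] R) :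
    Coalgebra.counit ∘ₗ leftTranslation v = v := by
  have swap_slices : Coalgebra.counit ∘ₗ (TensorProduct.rid R B).toLinearMap ∘ₗ v.lTensor B =
      v ∘ₗ (TensorProduct.lid R B).toLinearMap ∘ₗ Coalgebra.counit.rTensor B := by
    ext x y
    simp [mul_comm]
  ext b
  simpa [leftTranslation_eq_rid_comp_lTensor_comp_comul]
    using congr($swap_slices (Coalgebra.comul b))

section

variable {S M N P Q : Type*} [CommSemiring S] [AddCommMonoid M] [Module S M] [AddCommMonoid N]
  [Module S N] [AddCommMonoid P] [Module S P] [AddCommMonoid Q] [Module S Q]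

lemma lTensor_rid_comp_lTensor_lTensor_comp_assoc (v : P →ₗ[S] S)
    (f : Q →ₗ[S] M ⊗[S] N ⊗[S] P) :
    (TensorProduct.rid S N).toLinearMap.lTensor M ∘ₗ (v.lTensor N).lTensor M ∘ₗ
        (TensorProduct.assoc S M N P).toLinearMap ∘ₗ f =
      (TensorProduct.rid S (M ⊗[S] N)).toLinearMap ∘ₗ v.lTensor (M ⊗[S] N) ∘ₗ f := by
  simp only [← LinearMap.comp_assoc]
  congr 1
  ext x y z
  simp [smul_tmul']

end

lemma isLeftInvariant_leftTranslation (v : B →ₗ[R] R) : IsLeftInvariant (leftTranslation v) := by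
  change (leftTranslation v).lTensor B ∘ₗ Coalgebra.comul = Coalgebra.comul ∘ₗ leftTranslation v
  calc (leftTranslation v).lTensor B ∘ₗ Coalgebra.comul
      = (TensorProduct.rid R B).toLinearMap.lTensor B ∘ₗ (v.lTensor B).lTensor B ∘ₗ
          Coalgebra.comul.lTensor B ∘ₗ Coalgebra.comul := by
        simp only [leftTranslation_eq_rid_comp_lTensor_comp_comul, LinearMap.lTensor_comp,
          LinearMap.comp_assoc]
    _ = (TensorProduct.rid R (B ⊗[R] B)).toLinearMap ∘ₗ v.lTensor (B ⊗[R] B) ∘ₗ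
          Coalgebra.comul.rTensor B ∘ₗ Coalgebra.comul := by
        rw [← Coalgebra.coassoc, lTensor_rid_comp_lTensor_lTensor_comp_assoc]
    _ = Coalgebra.comul ∘ₗ leftTranslation v := by
        rw [← LinearMap.comp_assoc Coalgebra.comul, LinearMap.lTensor_comp_rTensor,
          ← LinearMap.comp_assoc, CoassocSimps.rid_comp_map]
        rfl

lemma isDerivation_iff {X : B →ₗ[R] B} :
    IsDerivation X ↔ ∀ f g : B, X (f * g) = X f * g + f * X g := by
  refine ⟨fun h f g ↦ by simpa using LinearMap.congr_fun h (f ⊗ₜ g), fun h ↦ ?_⟩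
  ext f g
  simpa using h f g

lemma IsDerivation.isEpsDerivation_counit_comp {X : B →ₗ[R] B} (hX : IsDerivation X) :
    IsEpsDerivation (Coalgebra.counit ∘ₗ X) := by
  intro f g
  simp [isDerivation_iff.mp hX f g, Bialgebra.counit_mul]

lemma IsEpsDerivation.rid_lTensor_mul {A : Type*} [Semiring A] [Algebra R A]
    {v : B →ₗ[R] R} (hv : IsEpsDerivation v) (x y : A ⊗[R] B) :
    TensorProduct.rid R A (v.lTensor A (x * y)) =
      TensorProduct.rid R A (v.lTensor A x) *
          TensorProduct.rid R A (Coalgebra.counit.lTensor A y) +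
        TensorProduct.rid R A (Coalgebra.counit.lTensor A x) *
          TensorProduct.rid R A (v.lTensor A y) := by
  induction x using TensorProduct.induction_on with
  | zero => simp
  | add x₁ x₂ h₁ h₂ =>
    simp only [add_mul, map_add, h₁, h₂]
    abel
  | tmul a b =>
    induction y using TensorProduct.induction_on with
    | zero => simp
    | add y₁ y₂ h₁ h₂ =>
      simp only [mul_add, map_add, h₁, h₂]
      abel
    | tmul c d =>
      simp only [Algebra.TensorProduct.tmul_mul_tmul, LinearMap.lTensor_tmul,
        TensorProduct.rid_tmul, hv b d, add_smul, smul_mul_smul_comm, mul_comm (v b)]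

lemma IsEpsDerivation.isDerivation_leftTranslation {v : B →ₗ[R] R} (hv : IsEpsDerivation v) :
    IsDerivation (leftTranslation v) := by
  have rid_counit_comul (b : B) :
      TensorProduct.rid R B (Coalgebra.counit.lTensor B (Coalgebra.comul b)) = b := by
    simp
  refine isDerivation_iff.mpr fun f g ↦ ?_
  simp only [leftTranslation_eq_rid_comp_lTensor_comp_comul, LinearMap.comp_apply,
    LinearEquiv.coe_coe, Bialgebra.comul_mul, hv.rid_lTensor_mul, rid_counit_comul]

/-- Every left-invariant derivation `X` of `B` satisfies
`X = id ⋆ (ε ∘ X)`; consequently `X ↦ ε ∘ X` is an `R`-linear bijection from left-invariant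
derivations of `B` onto `ε`-derivations `B → R`, with inverse `v ↦ id ⋆ v`. -/
theorem left_invariant_derivation_determined_by_value_at_unit :
    (∀ X : B →ₗ[R] B, IsDerivation X → IsLeftInvariant X →
        X = leftTranslation (Coalgebra.counit ∘ₗ X) ∧
          IsEpsDerivation (Coalgebra.counit ∘ₗ X)) ∧
    (∀ v : B →ₗ[R] R, IsEpsDerivation v →
        IsDerivation (leftTranslation v) ∧ IsLeftInvariant (leftTranslation v) ∧
          Coalgebra.counit ∘ₗ leftTranslation v = v) := by
  exact ⟨fun X hder hinv ↦
      ⟨hinv.leftTranslation_counit_comp.symm, hder.isEpsDerivation_counit_comp⟩,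
    fun v hv ↦ ⟨hv.isDerivation_leftTranslation, isLeftInvariant_leftTranslation v,
      counit_comp_leftTranslation v⟩⟩

end
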